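/- Let R be an irreducible finite reduced crystallographic root system with base B. Every nonzero dominant element λ of the rational span of R (i.e., λ with ⟨λ, α∨⟩ ≥ 0 for all α ∈ B) can be written as λ = Σ_{α∈B} m_α·α where every coefficient m_α is a strictly positive rational number. -/

import Mathlib

/-!
Roots lie in the span of the base, so `λ = ∑ c α • α` over `B`. Distinct simple roots are
obtuse: otherwise the reflection `β - n α` (`n > 0`) of one in the other would be a root with
coefficients of both signs. Splitting `c = c⁺ - c⁻` and putting `λ⁻ = ∑ (c α)⁻ • α`, we get
`⟪λ⁻, λ⁻⟫ = ⟪λ⁺, λ⁻⟫ - ⟪λ, λ⁻⟫ ≤ 0` by obtuseness and dominance, hence `c ≥ 0`. If `c α = 0`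
then `0 ≤ ⟪λ, α⟫ = ∑ c β ⟪β, α⟫ ≤ 0` forces `c β = 0` for every neighbour `β` of `α` in the
Dynkin diagram, so by connectedness a single zero coefficient would make `λ = 0`. Finally `c`
solves a linear system whose matrix (the Cartan matrix) is integral and nondegenerate and whose
right-hand side `⟨λ, α∨⟩` is rational, so `c` is rational.
-/

open scoped RealInnerProductSpace

variable {V : Type*} [NormedAddCommGroup V] [InnerProductSpace ℝ V]

/-- The reflection in the hyperplane orthogonal to `α`:
`x ↦ x - (2⟪α, x⟫/⟪α, α⟫) α`. -/
noncomputable def reflVec (α x : V) : V :=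
  x - ((2 * ⟪α, x⟫) / ⟪α, α⟫) • α

/-- `v` is a linear combination of the elements of `B` with nonnegative
coefficients. -/
def IsNonnegComb (B : Finset V) (v : V) : Prop :=
  ∃ c : V → ℝ, (∀ α, 0 ≤ c α) ∧ v = ∑ α ∈ B, c α • α

/-- A finite reduced crystallographic root system `R` in a Euclidean space `V`,
together with a base (system of simple roots) `B` and the simple reflections
`s α` (realized as linear automorphisms of `V`). -/
structure RootSystemData (V : Type*) [NormedAddCommGroup V]
    [InnerProductSpace ℝ V] where
  /-- the (finite) set of roots -/
  R : Finset V
  /-- the base (system of simple roots) -/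
  B : Finset V
  /-- the reflections: `s α` is the reflection in the hyperplane orthogonal
  to `α` (see `s_apply`) -/
  s : V → (V ≃ₗ[ℝ] V)
  zero_not_mem : (0 : V) ∉ R
  base_subset : B ⊆ R
  base_indep : LinearIndependent ℝ (fun b : {x // x ∈ B} => (b : V))
  /-- reduced: the only multiples of a root `α` that are roots are `±α` -/
  reduced : ∀ α ∈ R, ∀ c : ℝ, c • α ∈ R → c = 1 ∨ c = -1
  /-- crystallographic: `⟨β, α∨⟩ = 2⟪α, β⟫/⟪α, α⟫` is an integer -/
  crystallographic : ∀ α ∈ R, ∀ β ∈ R, ∃ n : ℤ, 2 * ⟪α, β⟫ = (n : ℝ) * ⟪α, α⟫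
  /-- `R` is stable under the reflections in its elements -/
  reflection_mem : ∀ α ∈ R, ∀ β ∈ R, reflVec α β ∈ R
  /-- `s α` is the reflection in the hyperplane orthogonal to `α` -/
  s_apply : ∀ α ∈ R, ∀ x : V, s α x = reflVec α x
  /-- every root is a nonnegative or a nonpositive combination of the base -/
  pos_or_neg : ∀ β ∈ R, IsNonnegComb B β ∨ IsNonnegComb B (-β)

/-- The positive roots: the roots which are nonnegative combinations of the
base. -/
noncomputable def posRoots (P : RootSystemData V) : Finset V :=
  @Finset.filter V (fun v => IsNonnegComb P.B v) (Classical.decPred _) P.R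

/-- The set of simple reflections. -/
def simples (P : RootSystemData V) : Set (V ≃ₗ[ℝ] V) :=
  P.s '' (P.B : Set V)

/-- The Weyl group: the subgroup of `GL(V)` generated by the simple
reflections. -/
def weylGroup (P : RootSystemData V) : Subgroup (V ≃ₗ[ℝ] V) :=
  Subgroup.closure (simples P)

/-- The length of `w` with respect to a generating set `S`: the least number of
factors in an expression of `w` as a product of elements of `S`. -/
noncomputable def lengthIn {G : Type*} [Group G] (S : Set G) (w : G) : ℕ :=
  sInf {n | ∃ l : List G, l.length = n ∧ (∀ x ∈ l, x ∈ S) ∧ l.prod = w}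

/-- The Dynkin diagram on a set `I` of simple roots: vertices are the elements
of `I`, with an edge between two distinct roots exactly when they are not
orthogonal. -/
def dynkinOn (I : Finset V) : SimpleGraph {x // x ∈ I} where
  Adj a b := a ≠ b ∧ ⟪(a : V), (b : V)⟫ ≠ 0
  symm := by
    constructor
    intro a b h
    refine ⟨h.1.symm, ?_⟩
    rw [real_inner_comm]
    exact h.2
  loopless := by
    constructor
    intro a h
    exact h.1 rfl
/-- `ρ`, the half-sum of the positive roots. -/
noncomputable def halfSumPos (P : RootSystemData V) : V :=
  (2⁻¹ : ℝ) • ∑ β ∈ posRoots P, β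

open Matrix

theorem SimpleGraph.Preconnected.forall_of_adj_imp {W : Type*} {G : SimpleGraph W}
    (hG : G.Preconnected) {p : W → Prop} (hp : ∀ ⦃u v⦄, G.Adj u v → p u → p v) {u : W}
    (hu : p u) (v : W) : p v := by
  induction (G.reachable_iff_reflTransGen u v).mp (hG u v) with
  | refl => exact hu
  | tail _ hadj ih => exact hp hadj ih

theorem Matrix.mem_range_of_mulVec_mem_range {K L ι : Type*} [Field K] [Field L] [Fintype ι]
    (f : K →+* L) {M : Matrix ι ι L} (hM : ∀ i j, M i j ∈ f.range)
    (hinj : Function.Injective M.mulVec) {c : ι → L} (hc : ∀ i, (M *ᵥ c) i ∈ f.range)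
    (i : ι) : c i ∈ f.range := by
  classical
  obtain ⟨A, hA⟩ : ∃ A : Matrix ι ι K, A.map f = M :=
    ⟨Matrix.of fun i j => (hM i j).choose, Matrix.ext fun i j => (hM i j).choose_spec⟩
  choose d hd using hc
  have hmap : ∀ x : ι → K, M *ᵥ (f ∘ x) = f ∘ (A *ᵥ x) := by
    intro x
    ext i
    rw [Function.comp_apply, RingHom.map_mulVec, hA]
  have hAinj : Function.Injective A.mulVec := fun x y hxy =>
    f.injective.comp_left (hinj (by rw [hmap, hmap, hxy]))
  obtain ⟨x, hx⟩ := mulVec_surjective_iff_isUnit.mpr (mulVec_injective_iff_isUnit.mp hAinj) d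
  have hcx : c = f ∘ x := hinj (by rw [hmap, hx]; exact (funext hd).symm)
  exact ⟨x i, by rw [hcx, Function.comp_apply]⟩

noncomputable def corootPairing (x α : V) : ℝ :=
  2 * ⟪x, α⟫ / ⟪α, α⟫

theorem corootPairing_sum {ι : Type*} (s : Finset ι) (f : ι → ℝ) (v : ι → V) (α : V) :
    corootPairing (∑ i ∈ s, f i • v i) α = ∑ i ∈ s, f i * corootPairing (v i) α := by
  simp only [corootPairing, sum_inner, real_inner_smul_left, Finset.mul_sum, Finset.sum_div]
  exact Finset.sum_congr rfl fun i _ => by ring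

theorem inner_nonneg_of_corootPairing_nonneg {x α : V} (h : 0 ≤ corootPairing x α) :
    0 ≤ ⟪x, α⟫ := by
  rcases eq_or_ne α 0 with rfl | hα
  · simp
  · rw [corootPairing, le_div_iff₀ (real_inner_self_pos.mpr hα)] at h
    linarith

theorem inner_eq_zero_of_corootPairing_eq_zero {x α : V} (h : corootPairing x α = 0) :
    ⟪x, α⟫ = 0 := by
  rcases eq_or_ne α 0 with rfl | hα
  · simp
  · rw [corootPairing, div_eq_zero_iff] at h
    exact h.elim (fun h' => by linarith) fun h' => absurd (inner_self_eq_zero.mp h') hα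

theorem reflVec_eq_sub_corootPairing_smul (α x : V) :
    reflVec α x = x - corootPairing x α • α := by
  rw [reflVec, corootPairing, real_inner_comm]

namespace RootSystemData

variable (P : RootSystemData V)

theorem inner_self_pos {α : V} (hα : α ∈ P.R) : 0 < ⟪α, α⟫ :=
  real_inner_self_pos.mpr fun h => P.zero_not_mem (h ▸ hα)

theorem exists_int_corootPairing {α β : V} (hα : α ∈ P.R) (hβ : β ∈ P.R) :
    ∃ n : ℤ, corootPairing β α = n := by
  obtain ⟨n, hn⟩ := P.crystallographic α hα β hβ
  refine ⟨n, ?_⟩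
  rw [corootPairing, real_inner_comm, hn, mul_div_cancel_right₀ _ (P.inner_self_pos hα).ne']

theorem eq_zero_of_sum_smul_eq_zero {g : P.B → ℝ} (h : ∑ b, g b • (b : V) = 0) : g = 0 :=
  funext (Fintype.linearIndependent_iff.mp P.base_indep g h)

theorem coeff_eq_of_sum_smul_eq {c d : V → ℝ}
    (h : ∑ α ∈ P.B, c α • α = ∑ α ∈ P.B, d α • α) : ∀ α ∈ P.B, c α = d α := by
  have hsub : ∑ b : P.B, (c b - d b) • (b : V) = 0 := by
    simp only [sub_smul, Finset.sum_sub_distrib, Finset.sum_coe_sort (f := fun α => c α • α),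
      Finset.sum_coe_sort (f := fun α => d α • α), h, sub_self]
  intro α hα
  exact sub_eq_zero.mp (congrFun (P.eq_zero_of_sum_smul_eq_zero hsub) ⟨α, hα⟩)

theorem coeff_nonneg_of_isNonnegComb {v : V} (hv : IsNonnegComb P.B v) {c : V → ℝ}
    (hc : v = ∑ α ∈ P.B, c α • α) : ∀ α ∈ P.B, 0 ≤ c α := by
  obtain ⟨e, he, hev⟩ := hv
  intro α hα
  rw [P.coeff_eq_of_sum_smul_eq (hc.symm.trans hev) α hα]
  exact he α

theorem inner_nonpos_of_ne {α β : V} (hα : α ∈ P.B) (hβ : β ∈ P.B) (hne : α ≠ β) :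
    ⟪α, β⟫ ≤ 0 := by
  classical
  by_contra! hpos
  obtain ⟨n, hn⟩ := P.exists_int_corootPairing (P.base_subset hα) (P.base_subset hβ)
  have hnpos : (0 : ℝ) < n := by
    rw [← hn, corootPairing, real_inner_comm]
    exact div_pos (by linarith) (P.inner_self_pos (P.base_subset hα))
  have hroot : β - (n : ℝ) • α ∈ P.R := by
    rw [← hn, ← reflVec_eq_sub_corootPairing_smul]
    exact P.reflection_mem α (P.base_subset hα) β (P.base_subset hβ)
  set c : V → ℝ := fun δ => (if δ = β then 1 else 0) - if δ = α then (n : ℝ) else 0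
  have hc : β - (n : ℝ) • α = ∑ δ ∈ P.B, c δ • δ := by
    simp [c, sub_smul, ite_smul, Finset.sum_sub_distrib, hα, hβ]
  rcases P.pos_or_neg _ hroot with hpos | hneg
  · have := P.coeff_nonneg_of_isNonnegComb hpos hc α hα
    simp only [c, if_neg hne, ↓reduceIte] at this
    linarith
  · have hc' : -(β - (n : ℝ) • α) = ∑ δ ∈ P.B, (-c δ) • δ := by
      simp only [hc, neg_smul, Finset.sum_neg_distrib]
    have := P.coeff_nonneg_of_isNonnegComb hneg hc' β hβ
    simp only [c, if_neg hne.symm, ↓reduceIte] at this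
    linarith

theorem inner_sum_smul_nonpos_of_disjoint {a b : V → ℝ} (ha : ∀ α, 0 ≤ a α) (hb : ∀ α, 0 ≤ b α)
    (hab : ∀ α ∈ P.B, a α = 0 ∨ b α = 0) :
    ⟪∑ α ∈ P.B, a α • α, ∑ β ∈ P.B, b β • β⟫ ≤ 0 := by
  simp only [sum_inner, inner_sum, real_inner_smul_left, real_inner_smul_right]
  refine Finset.sum_nonpos fun β hβ => Finset.sum_nonpos fun α hα => ?_
  rcases eq_or_ne α β with rfl | hne
  · rcases hab α hα with h | h <;> simp [h]
  · exact mul_nonpos_of_nonneg_of_nonpos (hb β)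
      (mul_nonpos_of_nonneg_of_nonpos (ha α) (P.inner_nonpos_of_ne hα hβ hne))

theorem coeff_nonneg_of_dominant {lam : V} (hdom : ∀ α ∈ P.B, 0 ≤ ⟪lam, α⟫) {c : V → ℝ}
    (hc : lam = ∑ α ∈ P.B, c α • α) : ∀ α ∈ P.B, 0 ≤ c α := by
  set lamPos := ∑ α ∈ P.B, (c α)⁺ • α
  set lamNeg := ∑ α ∈ P.B, (c α)⁻ • α
  have hsplit : lam = lamPos - lamNeg := by
    simp only [hc, lamPos, lamNeg, ← Finset.sum_sub_distrib, ← sub_smul, posPart_sub_negPart]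
  have hcross : ⟪lamPos, lamNeg⟫ ≤ 0 :=
    P.inner_sum_smul_nonpos_of_disjoint (fun α => posPart_nonneg _) (fun α => negPart_nonneg _)
      fun α _ => (le_total (c α) 0).imp posPart_eq_zero.mpr negPart_eq_zero.mpr
  have hdomNeg : 0 ≤ ⟪lam, lamNeg⟫ := by
    simp only [lamNeg, inner_sum, real_inner_smul_right]
    exact Finset.sum_nonneg fun α hα => mul_nonneg (negPart_nonneg _) (hdom α hα)
  have hNeg : lamNeg = 0 := by
    refine inner_self_eq_zero.mp (le_antisymm ?_ real_inner_self_nonneg)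
    have : ⟪lam, lamNeg⟫ = ⟪lamPos, lamNeg⟫ - ⟪lamNeg, lamNeg⟫ := by
      rw [hsplit, inner_sub_left]
    linarith
  intro α hα
  refine negPart_eq_zero.mp ?_
  refine P.coeff_eq_of_sum_smul_eq (c := fun α => (c α)⁻) (d := 0) ?_ α hα
  simpa only [Pi.zero_apply, zero_smul, Finset.sum_const_zero] using hNeg

theorem coeff_eq_zero_of_inner_ne_zero {lam : V} (hdom : ∀ α ∈ P.B, 0 ≤ ⟪lam, α⟫)
    {c : V → ℝ} (hc : lam = ∑ α ∈ P.B, c α • α) {α β : V} (hα : α ∈ P.B) (hβ : β ∈ P.B)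
    (hcα : c α = 0) (hαβ : ⟪α, β⟫ ≠ 0) : c β = 0 := by
  have hnonneg := P.coeff_nonneg_of_dominant hdom hc
  have hterm : ∀ γ ∈ P.B, c γ * ⟪γ, α⟫ ≤ 0 := by
    intro γ hγ
    rcases eq_or_ne γ α with rfl | hne
    · simp [hcα]
    · exact mul_nonpos_of_nonneg_of_nonpos (hnonneg γ hγ) (P.inner_nonpos_of_ne hγ hα hne)
  have hsum : ∑ γ ∈ P.B, c γ * ⟪γ, α⟫ = 0 := by
    refine le_antisymm (Finset.sum_nonpos hterm) ?_
    simpa only [hc, sum_inner, real_inner_smul_left] using hdom α hα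
  have := (Finset.sum_eq_zero_iff_of_nonpos hterm).mp hsum β hβ
  exact (mul_eq_zero.mp this).resolve_right (by rwa [real_inner_comm])

theorem coeff_pos_of_dominant (hirr : (dynkinOn P.B).Connected) {lam : V} (hne : lam ≠ 0)
    (hdom : ∀ α ∈ P.B, 0 ≤ ⟪lam, α⟫) {c : V → ℝ} (hc : lam = ∑ α ∈ P.B, c α • α) :
    ∀ α ∈ P.B, 0 < c α := by
  intro α hα
  refine (P.coeff_nonneg_of_dominant hdom hc α hα).lt_of_ne' fun hcα => hne ?_
  have hzero : ∀ β : P.B, c β = 0 :=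
    hirr.preconnected.forall_of_adj_imp (p := fun β : P.B => c β = 0)
      (fun β γ hadj hβ => P.coeff_eq_zero_of_inner_ne_zero hdom hc β.2 γ.2 hβ hadj.2)
      (u := ⟨α, hα⟩) hcα
  rw [hc]
  exact Finset.sum_eq_zero fun β hβ => by rw [hzero ⟨β, hβ⟩, zero_smul]

theorem mem_span_base {β : V} (hβ : β ∈ P.R) : β ∈ Submodule.span ℝ (P.B : Set V) := by
  have hcomb : ∀ {v}, IsNonnegComb P.B v → v ∈ Submodule.span ℝ (P.B : Set V) :=
    fun ⟨c, _, hv⟩ => hv ▸ Submodule.sum_smul_mem _ _ fun α hα => Submodule.subset_span hα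
  rcases P.pos_or_neg β hβ with h | h
  · exact hcomb h
  · simpa only [neg_neg] using Submodule.neg_mem _ (hcomb h)

noncomputable def cartanMatrix : Matrix P.B P.B ℝ :=
  Matrix.of fun a b => corootPairing (b : V) a

theorem cartanMatrix_mulVec (x : P.B → ℝ) (a : P.B) :
    (P.cartanMatrix *ᵥ x) a = corootPairing (∑ b, x b • (b : V)) a := by
  simp only [Matrix.mulVec, dotProduct, cartanMatrix, Matrix.of_apply, corootPairing_sum,
    mul_comm]

theorem cartanMatrix_mulVec_injective : Function.Injective P.cartanMatrix.mulVec := by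
  rw [← Matrix.coe_mulVecLin, injective_iff_map_eq_zero]
  intro x hx
  have horth : ∀ a : P.B, ⟪∑ b, x b • (b : V), (a : V)⟫ = 0 := fun a =>
    inner_eq_zero_of_corootPairing_eq_zero <| by
      rw [← cartanMatrix_mulVec, ← Matrix.coe_mulVecLin, hx, Pi.zero_apply]
  have hzero : ∑ b, x b • (b : V) = 0 := by
    rw [← inner_self_eq_zero (𝕜 := ℝ), inner_sum]
    simp only [real_inner_smul_right, horth, mul_zero, Finset.sum_const_zero]
  exact P.eq_zero_of_sum_smul_eq_zero hzero

theorem exists_rat_coeff {lam : V} {e : V → ℚ} (he : lam = ∑ β ∈ P.R, (e β : ℝ) • β)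
    {c : V → ℝ} (hc : lam = ∑ α ∈ P.B, c α • α) : ∃ m : V → ℚ, ∀ α ∈ P.B, c α = m α := by
  classical
  have hint : ∀ {α β : V}, α ∈ P.R → β ∈ P.R → corootPairing β α ∈ (Rat.castHom ℝ).range := by
    intro α β hα hβ
    obtain ⟨n, hn⟩ := P.exists_int_corootPairing hα hβ
    exact hn ▸ intCast_mem _ n
  have hrat : ∀ b : P.B, c b ∈ (Rat.castHom ℝ).range := by
    refine Matrix.mem_range_of_mulVec_mem_range _ (M := P.cartanMatrix)
      (fun a b => hint (P.base_subset a.2) (P.base_subset b.2))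
      P.cartanMatrix_mulVec_injective (c := fun b => c b) fun a => ?_
    rw [cartanMatrix_mulVec, Finset.sum_coe_sort (f := fun α => c α • α), ← hc, he,
      corootPairing_sum]
    exact Subring.sum_mem _ fun β hβ =>
      Subring.mul_mem _ ⟨e β, rfl⟩ (hint (P.base_subset a.2) hβ)
  choose q hq using hrat
  exact ⟨fun α => if h : α ∈ P.B then q ⟨α, h⟩ else 0, fun α hα => by
    simp only [dif_pos hα, ← hq ⟨α, hα⟩, Rat.coe_castHom]⟩

end RootSystemData

/-- Let `R` be an irreducible finite reduced crystallographic root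
system with base `B`. Every nonzero dominant element `λ` of the rational span
of `R` (i.e., with `⟨λ, α∨⟩ = 2⟪λ, α⟫/⟪α, α⟫ ≥ 0` for all `α ∈ B`) can be
written as `λ = Σ_{α∈B} m_α α` with all coefficients `m_α` strictly positive
rationals. -/
theorem dominant_pos_coeffs {V : Type*} [NormedAddCommGroup V]
    [InnerProductSpace ℝ V] (P : RootSystemData V)
    (hirr : (dynkinOn P.B).Connected)
    (lam : V) (hne : lam ≠ 0)
    (hratspan : ∃ c : V → ℚ, lam = ∑ α ∈ P.R, (c α : ℝ) • α)
    (hdom : ∀ α ∈ P.B, 0 ≤ 2 * ⟪lam, α⟫ / ⟪α, α⟫) :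
    ∃ m : V → ℚ, (∀ α ∈ P.B, 0 < m α) ∧ lam = ∑ α ∈ P.B, (m α : ℝ) • α := by
  obtain ⟨e, he⟩ := hratspan
  have hspan : lam ∈ Submodule.span ℝ (P.B : Set V) :=
    he ▸ Submodule.sum_smul_mem _ _ fun β hβ => P.mem_span_base hβ
  obtain ⟨c, -, hc⟩ := Submodule.mem_span_finset.mp hspan
  obtain ⟨m, hm⟩ := P.exists_rat_coeff he hc.symm
  have hpos := P.coeff_pos_of_dominant hirr hne
    (fun α hα => inner_nonneg_of_corootPairing_nonneg (hdom α hα)) hc.symm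
  refine ⟨m, fun α hα => ?_, ?_⟩
  · exact_mod_cast hm α hα ▸ hpos α hα
  · rw [← hc]
    exact Finset.sum_congr rfl fun α hα => by rw [hm α hα]
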